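/- Let L be a Latin square of order 4m+2 for some integer m ≥ 0. Then L cannot both possess a transversal (a partial transversal of length 4m+2) and a maximal partial transversal of length 2m+1. -/

import Mathlib

/-!
Let `T` be a maximal partial transversal of length `k` in a Latin square of order `2k`, with
used rows `A`, columns `C` and symbols `S`. By maximality every cell in an unused row and an
unused column holds a symbol of `S`; as an unused row meets the `k` unused columns in `k`
distinct symbols, it holds the symbols of `S` exactly there, and symmetrically for unused
columns. Counting once more in a used column, the cells of `A × C` hold symbols of `S` as well,
so a cell `(r, c, s)` has `s ∈ S` exactly when `r ∈ A ↔ c ∈ C`. A transversal `F` meets `A`, `C`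
and `S` in `k` cells each, and `#{r ∈ A} + #{c ∈ C} + #{r ∈ A ↔ c ∈ C} ≡ #F (mod 2)` for any set
`F` of cells, so `3k ≡ 2k`: `k` must be even.
-/

/-- A Latin square of order `n` as a set of triples `(r,c,s)`:
any two coordinates determine the third uniquely. -/
def IsLatinSquare {n : ℕ} (L : Finset (Fin n × Fin n × Fin n)) : Prop :=
  (∀ r c : Fin n, ∃! s : Fin n, (r, c, s) ∈ L) ∧
  (∀ r s : Fin n, ∃! c : Fin n, (r, c, s) ∈ L) ∧
  (∀ c s : Fin n, ∃! r : Fin n, (r, c, s) ∈ L)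

/-- A partial transversal: a subset of the triples with pairwise distinct
rows, columns and symbols. -/
def IsPartialTransversal {α β γ : Type*} (L T : Finset (α × β × γ)) : Prop :=
  T ⊆ L ∧ ∀ t ∈ T, ∀ t' ∈ T, t ≠ t' →
    t.1 ≠ t'.1 ∧ t.2.1 ≠ t'.2.1 ∧ t.2.2 ≠ t'.2.2

/-- A maximal partial transversal: one not properly contained in any
larger partial transversal. -/
def IsMaximalPartialTransversal {α β γ : Type*} (L T : Finset (α × β × γ)) : Prop :=
  IsPartialTransversal L T ∧
    ∀ T' : Finset (α × β × γ), IsPartialTransversal L T' → T ⊆ T' → T' = T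

open Finset

variable {α β γ ι : Type*}

theorem Finset.exists_rel_of_card_le {X : Finset α} {Y : Finset β} (R : α → β → Prop)
    (hR : ∀ a ∈ X, ∃ b ∈ Y, R a b) (hinj : ∀ a ∈ X, ∀ a' ∈ X, ∀ b, R a b → R a' b → a = a')
    (hcard : #Y ≤ #X) {b : β} (hb : b ∈ Y) : ∃ a ∈ X, R a b := by
  choose f hfY hfR using hR
  obtain ⟨a, ha, rfl⟩ := surj_on_of_inj_on_of_card_le f hfY
    (fun a a' ha ha' h => hinj a ha a' ha' _ (hfR a ha) (h ▸ hfR a' ha')) hcard b hb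
  exact ⟨a, ha, hfR a ha⟩

theorem Finset.card_filter_mem_of_injOn [Fintype α] [DecidableEq α] {F : Finset ι}
    {f : ι → α} (hf : Set.InjOn f F) (hcard : #F = Fintype.card α) (A : Finset α) :
    #{x ∈ F | f x ∈ A} = #A := by
  have himage : F.image f = univ :=
    eq_univ_of_card _ (by rw [card_image_of_injOn hf, hcard])
  calc #{x ∈ F | f x ∈ A} = #({x ∈ F | f x ∈ A}.image f) :=
        (card_image_of_injOn (hf.mono (filter_subset _ _))).symm
    _ = #A := by rw [← filter_image (p := (· ∈ A)), himage, filter_univ_mem]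

theorem Finset.card_filter_add_card_filter_add_card_filter_iff (F : Finset ι) (p q : ι → Prop)
    [DecidablePred p] [DecidablePred q] :
    #{x ∈ F | p x} + #{x ∈ F | q x} + #{x ∈ F | p x ↔ q x} =
      #F + 2 * #{x ∈ F | p x ∧ q x} := by
  rw [card_filter, card_filter, card_filter, card_filter, card_eq_sum_ones, mul_sum,
    ← sum_add_distrib, ← sum_add_distrib, ← sum_add_distrib]
  refine sum_congr rfl fun x _ => ?_
  by_cases hp : p x <;> by_cases hq : q x <;> simp [hp, hq]

def rowsOf [DecidableEq α] (T : Finset (α × β × γ)) : Finset α := T.image fun t => t.1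

def colsOf [DecidableEq β] (T : Finset (α × β × γ)) : Finset β := T.image fun t => t.2.1

def symbolsOf [DecidableEq γ] (T : Finset (α × β × γ)) : Finset γ := T.image fun t => t.2.2

namespace IsPartialTransversal

variable {L T : Finset (α × β × γ)}

theorem injOn_row (hT : IsPartialTransversal L T) : Set.InjOn (fun t : α × β × γ => t.1) T :=
  fun t ht t' ht' h => by_contra fun hne => (hT.2 t ht t' ht' hne).1 h

theorem injOn_col (hT : IsPartialTransversal L T) : Set.InjOn (fun t : α × β × γ => t.2.1) T :=
  fun t ht t' ht' h => by_contra fun hne => (hT.2 t ht t' ht' hne).2.1 h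

theorem injOn_symbol (hT : IsPartialTransversal L T) :
    Set.InjOn (fun t : α × β × γ => t.2.2) T :=
  fun t ht t' ht' h => by_contra fun hne => (hT.2 t ht t' ht' hne).2.2 h

theorem card_rowsOf [DecidableEq α] (hT : IsPartialTransversal L T) : #(rowsOf T) = #T :=
  card_image_of_injOn hT.injOn_row

theorem card_colsOf [DecidableEq β] (hT : IsPartialTransversal L T) : #(colsOf T) = #T :=
  card_image_of_injOn hT.injOn_col

theorem card_symbolsOf [DecidableEq γ] (hT : IsPartialTransversal L T) :
    #(symbolsOf T) = #T :=
  card_image_of_injOn hT.injOn_symbol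

protected theorem insert [DecidableEq α] [DecidableEq β] [DecidableEq γ]
    (hT : IsPartialTransversal L T) {t : α × β × γ} (ht : t ∈ L)
    (hdisj : ∀ t' ∈ T, t.1 ≠ t'.1 ∧ t.2.1 ≠ t'.2.1 ∧ t.2.2 ≠ t'.2.2) :
    IsPartialTransversal L (insert t T) := by
  refine ⟨insert_subset ht hT.1, ?_⟩
  simp only [mem_insert]
  rintro u (rfl | hu) v (rfl | hv) huv
  · exact absurd rfl huv
  · exact hdisj v hv
  · exact (hdisj u hu).imp Ne.symm (And.imp Ne.symm Ne.symm)
  · exact hT.2 u hu v hv huv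

end IsPartialTransversal

theorem IsMaximalPartialTransversal.mem_symbolsOf [DecidableEq α] [DecidableEq β]
    [DecidableEq γ] {L T : Finset (α × β × γ)}
    (hT : IsMaximalPartialTransversal L T) {r : α} {c : β} {s : γ} (h : (r, c, s) ∈ L)
    (hr : r ∉ rowsOf T) (hc : c ∉ colsOf T) : s ∈ symbolsOf T := by
  by_contra hs
  have hdisj : ∀ t ∈ T, r ≠ t.1 ∧ c ≠ t.2.1 ∧ s ≠ t.2.2 := fun t ht =>
    ⟨fun h => hr (h ▸ mem_image_of_mem _ ht), fun h => hc (h ▸ mem_image_of_mem _ ht),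
      fun h => hs (h ▸ mem_image_of_mem _ ht)⟩
  have hmem : (r, c, s) ∈ T := by
    rw [← hT.2 _ (hT.1.insert h hdisj) (subset_insert _ _)]
    exact mem_insert_self _ _
  exact hr (mem_image_of_mem _ hmem)

namespace IsLatinSquare

variable {n : ℕ} {L T : Finset (Fin n × Fin n × Fin n)} {r c s : Fin n}

theorem notMem_colsOf (hL : IsLatinSquare L) (hT : IsMaximalPartialTransversal L T)
    (hn : n = 2 * #T) (h : (r, c, s) ∈ L) (hr : r ∉ rowsOf T) (hs : s ∈ symbolsOf T) :
    c ∉ colsOf T := by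
  obtain ⟨c', hc', hc's⟩ := exists_rel_of_card_le (X := (colsOf T)ᶜ) (fun c s => (r, c, s) ∈ L)
    (fun c hc => let ⟨s, hs, _⟩ := hL.1 r c; ⟨s, hT.mem_symbolsOf hs hr (mem_compl.1 hc), hs⟩)
    (fun _ _ _ _ s h h' => (hL.2.1 r s).unique h h')
    (by rw [card_compl, Fintype.card_fin, hT.1.card_colsOf, hT.1.card_symbolsOf]; omega) hs
  exact (hL.2.1 r s).unique h hc's ▸ mem_compl.1 hc'

theorem notMem_rowsOf (hL : IsLatinSquare L) (hT : IsMaximalPartialTransversal L T)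
    (hn : n = 2 * #T) (h : (r, c, s) ∈ L) (hc : c ∉ colsOf T) (hs : s ∈ symbolsOf T) :
    r ∉ rowsOf T := by
  obtain ⟨r', hr', hr's⟩ := exists_rel_of_card_le (X := (rowsOf T)ᶜ) (fun r s => (r, c, s) ∈ L)
    (fun r hr => let ⟨s, hs, _⟩ := hL.1 r c; ⟨s, hT.mem_symbolsOf hs (mem_compl.1 hr) hc, hs⟩)
    (fun _ _ _ _ s h h' => (hL.2.2 c s).unique h h')
    (by rw [card_compl, Fintype.card_fin, hT.1.card_rowsOf, hT.1.card_symbolsOf]; omega) hs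
  exact (hL.2.2 c s).unique h hr's ▸ mem_compl.1 hr'

theorem mem_symbolsOf_of_mem (hL : IsLatinSquare L) (hT : IsMaximalPartialTransversal L T)
    (hn : n = 2 * #T) (h : (r, c, s) ∈ L) (hr : r ∈ rowsOf T) (hc : c ∈ colsOf T) :
    s ∈ symbolsOf T := by
  obtain ⟨s', hs', hs'r⟩ := exists_rel_of_card_le (X := symbolsOf T) (Y := rowsOf T)
    (fun s r => (r, c, s) ∈ L)
    (fun s hs => let ⟨r, hr, _⟩ := hL.2.2 c s
      ⟨r, by_contra fun hr' => hL.notMem_colsOf hT hn hr hr' hs hc, hr⟩)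
    (fun _ _ _ _ r h h' => (hL.1 r c).unique h h')
    (by rw [hT.1.card_rowsOf, hT.1.card_symbolsOf]) hr
  exact (hL.1 r c).unique h hs'r ▸ hs'

theorem mem_symbolsOf_iff (hL : IsLatinSquare L) (hT : IsMaximalPartialTransversal L T)
    (hn : n = 2 * #T) (h : (r, c, s) ∈ L) :
    s ∈ symbolsOf T ↔ (r ∈ rowsOf T ↔ c ∈ colsOf T) := by
  by_cases hr : r ∈ rowsOf T <;> by_cases hc : c ∈ colsOf T
  · simpa [hr, hc] using hL.mem_symbolsOf_of_mem hT hn h hr hc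
  · simpa [hr, hc] using fun hs => hL.notMem_rowsOf hT hn h hc hs hr
  · simpa [hr, hc] using fun hs => hL.notMem_colsOf hT hn h hr hs hc
  · simpa [hr, hc] using hT.mem_symbolsOf h hr hc

theorem even_card_of_isMaximalPartialTransversal (hL : IsLatinSquare L)
    (hT : IsMaximalPartialTransversal L T) (hn : n = 2 * #T)
    {F : Finset (Fin n × Fin n × Fin n)} (hF : IsPartialTransversal L F) (hFcard : #F = n) :
    Even #T := by
  have hFcard' : #F = Fintype.card (Fin n) := by rw [hFcard, Fintype.card_fin]
  have hsymbols : {t ∈ F | t.2.2 ∈ symbolsOf T} = {t ∈ F | t.1 ∈ rowsOf T ↔ t.2.1 ∈ colsOf T} :=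
    filter_congr fun t ht => hL.mem_symbolsOf_iff hT hn (hF.1 ht)
  have hcount := card_filter_add_card_filter_add_card_filter_iff F
    (fun t => t.1 ∈ rowsOf T) (fun t => t.2.1 ∈ colsOf T)
  rw [← hsymbols, card_filter_mem_of_injOn hF.injOn_row hFcard',
    card_filter_mem_of_injOn hF.injOn_col hFcard', card_filter_mem_of_injOn hF.injOn_symbol hFcard',
    hT.1.card_rowsOf, hT.1.card_colsOf, hT.1.card_symbolsOf] at hcount
  rw [even_iff_two_dvd]
  omega

end IsLatinSquare

theorem stmt1 (m : ℕ) (L : Finset (Fin (4*m+2) × Fin (4*m+2) × Fin (4*m+2)))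
    (hL : IsLatinSquare L) :
    ¬ ((∃ T, IsPartialTransversal L T ∧ T.card = 4*m+2) ∧
       (∃ T, IsMaximalPartialTransversal L T ∧ T.card = 2*m+1)) := by
  rintro ⟨⟨F, hF, hFcard⟩, ⟨T, hT, hTcard⟩⟩
  have hEven := hL.even_card_of_isMaximalPartialTransversal hT (by omega) hF hFcard
  rw [hTcard] at hEven
  exact Nat.not_even_two_mul_add_one m hEven
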